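/- arXiv:2501.09917 — 3 statements merged into one kernel-verified Lean document; each statement's English description precedes it below -/
import Mathlib

section
/- Under Assumption 1 with parameter k, for all integers t, t' with t − t' ≥ k, the long autocovariance of log-wage residuals factorizes as cov(w_t, w_{t'}) = μ_t · ( μ_{t'} · cov(θ_{t'+k−1}, θ_{t'}) + cov(θ_{t'+k−1}, ε_{t'}) ). In particular, cov(w_t, w_{t'}) = μ_t · Ω_{t'}, where Ω_{t'} := μ_{t'} · cov(θ_{t'+k−1}, θ_{t'}) + cov(θ_{t'+k−1}, ε_{t'}) does not depend on t. -/
/-!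
Write `w_t = μ_t θ_t + ε_t` and expand `cov(w_t, w_{t'})` bilinearly. For `t - t' ≥ k` the two
terms containing `ε_t` vanish by (iii) and (iv). In the remaining terms `cov(θ_t, θ_{t'})` and
`cov(θ_t, ε_{t'})`, conditions (i) and (ii) say that every increment `θ_s - θ_{s-1}` with
`s ≥ t' + k` is uncorrelated with `θ_{t'}` and `ε_{t'}`, so telescoping from `s = t` down to
`s = t' + k` replaces `θ_t` by `θ_{t'+k-1}`.
-/

open MeasureTheory ProbabilityTheory

/-- Covariance of two real-valued random variables under measure `P`. -/
noncomputable def cov {Ω : Type*} [MeasurableSpace Ω] (P : Measure Ω) (X Y : Ω → ℝ) : ℝ :=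
  ∫ ω, (X ω - ∫ a, X a ∂P) * (Y ω - ∫ a, Y a ∂P) ∂P

/-- Variance of a real-valued random variable under measure `P`. -/
noncomputable def Var {Ω : Type*} [MeasurableSpace Ω] (P : Measure Ω) (X : Ω → ℝ) : ℝ :=
  cov P X X

section Covariance

variable {Ω : Type*} [MeasurableSpace Ω] {μ : Measure Ω}

lemma cov_eq_covariance (X Y : Ω → ℝ) : cov μ X Y = cov[X, Y; μ] := rfl

variable [IsFiniteMeasure μ]

lemma covariance_const_mul_add_const_mul_add {X Y Z W : Ω → ℝ} (hX : MemLp X 2 μ)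
    (hY : MemLp Y 2 μ) (hZ : MemLp Z 2 μ) (hW : MemLp W 2 μ) (a b : ℝ) :
    cov[fun ω ↦ a * X ω + Y ω, fun ω ↦ b * Z ω + W ω; μ] =
      a * b * cov[X, Z; μ] + a * cov[X, W; μ] + b * cov[Y, Z; μ] + cov[Y, W; μ] := by
  change cov[(fun ω ↦ a * X ω) + Y, (fun ω ↦ b * Z ω) + W; μ] = _
  rw [covariance_add_left (hX.const_mul a) hY ((hZ.const_mul b).add hW),
    covariance_const_mul_left,
    covariance_add_right hX (hZ.const_mul b) hW, covariance_add_right hY (hZ.const_mul b) hW,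
    covariance_const_mul_right, covariance_const_mul_right]
  ring

lemma covariance_eq_of_covariance_sub_pred_eq_zero {X : ℤ → Ω → ℝ} {Z : Ω → ℝ}
    (hX : ∀ s, MemLp (X s) 2 μ) (hZ : MemLp Z 2 μ) {a : ℤ}
    (hinc : ∀ s, a < s → cov[X s - X (s - 1), Z; μ] = 0) {t : ℤ} (hat : a ≤ t) :
    cov[X t, Z; μ] = cov[X a, Z; μ] := by
  induction t, hat using Int.leInduction with
  | base => rfl
  | succ s has ih =>
    have hstep := hinc (s + 1) (by omega)
    rw [add_sub_cancel_right, covariance_sub_left (hX _) (hX _) hZ, sub_eq_zero] at hstep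
    rw [hstep, ih]

end Covariance

theorem long_autocov_factorization_general
    {Ω : Type*} [MeasurableSpace Ω] (P : Measure Ω) [IsProbabilityMeasure P]
    (θ ε : ℤ → Ω → ℝ) (μ : ℤ → ℝ) (w : ℤ → Ω → ℝ)
    (hθ : ∀ t, MemLp (θ t) 2 P) (hε : ∀ t, MemLp (ε t) 2 P)
    (hw : ∀ t ω, w t ω = μ t * θ t ω + ε t ω)
    (k : ℕ)
    (A1i : ∀ t t' : ℤ, (k : ℤ) ≤ t - t' →
      cov P (fun ω => θ t ω - θ (t - 1) ω) (θ t') = 0)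
    (A1ii : ∀ t t' : ℤ, (k : ℤ) ≤ t - t' →
      cov P (fun ω => θ t ω - θ (t - 1) ω) (ε t') = 0)
    (A1iii : ∀ t t' : ℤ, (k : ℤ) ≤ t - t' → cov P (ε t) (θ t') = 0)
    (A1iv : ∀ t t' : ℤ, (k : ℤ) ≤ t - t' → cov P (ε t) (ε t') = 0) :
    ∀ t t' : ℤ, (k : ℤ) ≤ t - t' →
      cov P (w t) (w t') =
        μ t * (μ t' * cov P (θ (t' + k - 1)) (θ t') + cov P (θ (t' + k - 1)) (ε t')) := by
  intro t t' htt'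
  obtain rfl : w = fun s ω ↦ μ s * θ s ω + ε s ω := funext fun s ↦ funext (hw s)
  have hθθ : cov[θ t, θ t'; P] = cov[θ (t' + k - 1), θ t'; P] :=
    covariance_eq_of_covariance_sub_pred_eq_zero hθ (hθ t')
      (fun s hs ↦ A1i s t' (by omega)) (by omega)
  have hθε : cov[θ t, ε t'; P] = cov[θ (t' + k - 1), ε t'; P] :=
    covariance_eq_of_covariance_sub_pred_eq_zero hθ (hε t')
      (fun s hs ↦ A1ii s t' (by omega)) (by omega)
  simp only [cov_eq_covariance] at A1iii A1iv ⊢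
  rw [covariance_const_mul_add_const_mul_add (hθ t) (hε t) (hθ t') (hε t'),
    A1iii t t' htt', A1iv t t' htt', hθθ, hθε]
  ring

/-- Under Assumption 1 with parameter `k`, long autocovariances of log-wage residuals
factorize: `cov (w t) (w t') = μ t * Ω t'` where
`Ω t' = μ t' * cov (θ (t'+k-1)) (θ t') + cov (θ (t'+k-1)) (ε t')`. -/
theorem long_autocov_factorization
    {Ω : Type*} [MeasurableSpace Ω] (P : Measure Ω) [IsProbabilityMeasure P]
    (θ ε : ℤ → Ω → ℝ) (μ : ℤ → ℝ) (w : ℤ → Ω → ℝ)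
    (hθ : ∀ t, MemLp (θ t) 2 P) (hε : ∀ t, MemLp (ε t) 2 P)
    (hw : ∀ t ω, w t ω = μ t * θ t ω + ε t ω)
    (k : ℕ) (hk : 1 ≤ k)
    (A1i : ∀ t t' : ℤ, (k : ℤ) ≤ t - t' →
      cov P (fun ω => θ t ω - θ (t - 1) ω) (θ t') = 0)
    (A1ii : ∀ t t' : ℤ, (k : ℤ) ≤ t - t' →
      cov P (fun ω => θ t ω - θ (t - 1) ω) (ε t') = 0)
    (A1iii : ∀ t t' : ℤ, (k : ℤ) ≤ t - t' → cov P (ε t) (θ t') = 0)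
    (A1iv : ∀ t t' : ℤ, (k : ℤ) ≤ t - t' → cov P (ε t) (ε t') = 0) :
    ∀ t t' : ℤ, (k : ℤ) ≤ t - t' →
      cov P (w t) (w t') =
        μ t * (μ t' * cov P (θ (t' + k - 1)) (θ t') + cov P (θ (t' + k - 1)) (ε t')) :=
  long_autocov_factorization_general P θ ε μ w hθ hε hw k A1i A1ii A1iii A1iv
end

section
/- (Quasi-differenced long autocovariance in the fixed-effect plus AR(1) model.) In the fixed-effect/AR(1) setting, for all integers t, t' with t' ≤ t − k − 1, cov(w_{t'}, w_t) − ρ_t · cov(w_{t'}, w_{t−1}) = μ_{t'} · (μ_t − ρ_t · μ_{t−1}) · Var(ψ). -/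
open MeasureTheory ProbabilityTheory

/-!
Expanding both wages, the orthogonality conditions leave
`cov(w_{t'}, w_s) = μ_{t'} μ_s Var ψ + cov(φ_{t'}, φ_s) + cov(ε_{t'}, ε_s)`.
For `s = t` and `s = t − 1` the lag `s − t'` is at least `k`, so the `ε`-term vanishes, and since
`ν_t` is orthogonal to the past, the recursion gives `cov(φ_{t'}, φ_t) = ρ_t cov(φ_{t'}, φ_{t−1})`:
the quasi-difference cancels the `φ`-terms.
-/

namespace ProbabilityTheory

variable {Ω : Type*} [MeasurableSpace Ω] {P : Measure Ω} [IsFiniteMeasure P]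
  {Z X Y V : Ω → ℝ}

lemma covariance_smul_add_add_left (a : ℝ) (hZ : MemLp Z 2 P) (hX : MemLp X 2 P)
    (hY : MemLp Y 2 P) (hV : MemLp V 2 P) :
    cov[a • Z + X + Y, V; P] = a * cov[Z, V; P] + cov[X, V; P] + cov[Y, V; P] := by
  rw [covariance_add_left ((hZ.const_smul a).add hX) hY hV,
    covariance_add_left (hZ.const_smul a) hX hV, covariance_smul_left]

lemma covariance_smul_add_add_right (a : ℝ) (hZ : MemLp Z 2 P) (hX : MemLp X 2 P)
    (hY : MemLp Y 2 P) (hV : MemLp V 2 P) :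
    cov[V, a • Z + X + Y; P] = a * cov[V, Z; P] + cov[V, X; P] + cov[V, Y; P] := by
  rw [covariance_comm, covariance_smul_add_add_left a hZ hX hY hV,
    covariance_comm Z, covariance_comm X, covariance_comm Y]

lemma covariance_factor_add_add {X₁ X₂ Y₁ Y₂ : Ω → ℝ} (a b : ℝ) (hZ : MemLp Z 2 P)
    (hX₁ : MemLp X₁ 2 P) (hX₂ : MemLp X₂ 2 P) (hY₁ : MemLp Y₁ 2 P) (hY₂ : MemLp Y₂ 2 P)
    (hZX₁ : cov[Z, X₁; P] = 0) (hZX₂ : cov[Z, X₂; P] = 0)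
    (hZY₁ : cov[Z, Y₁; P] = 0) (hZY₂ : cov[Z, Y₂; P] = 0)
    (hX₁Y₂ : cov[X₁, Y₂; P] = 0) (hX₂Y₁ : cov[X₂, Y₁; P] = 0) :
    cov[a • Z + X₁ + Y₁, b • Z + X₂ + Y₂; P] =
      a * b * cov[Z, Z; P] + cov[X₁, X₂; P] + cov[Y₁, Y₂; P] := by
  have hV := ((hZ.const_smul b).add hX₂).add hY₂
  rw [covariance_smul_add_add_left a hZ hX₁ hY₁ hV,
    covariance_smul_add_add_right b hZ hX₂ hY₂ hZ,
    covariance_smul_add_add_right b hZ hX₂ hY₂ hX₁,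
    covariance_smul_add_add_right b hZ hX₂ hY₂ hY₁,
    covariance_comm X₁ Z, covariance_comm Y₁ Z, covariance_comm Y₁ X₂,
    hZX₁, hZX₂, hZY₁, hZY₂, hX₁Y₂, hX₂Y₁]
  ring

lemma covariance_smul_add_right_of_covariance_eq_zero {N : Ω → ℝ} (c : ℝ) (hV : MemLp V 2 P)
    (hX : MemLp X 2 P) (hN : MemLp N 2 P) (hVN : cov[V, N; P] = 0) :
    cov[V, c • X + N; P] = c * cov[V, X; P] := by
  rw [covariance_add_right hV (hX.const_smul c) hN, covariance_smul_right, hVN, add_zero]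

end ProbabilityTheory

theorem FE_AR1_quasi_differenced_autocov_general
    {Ω : Type*} [MeasurableSpace Ω] (P : Measure Ω) [IsProbabilityMeasure P]
    (μ ρ : ℤ → ℝ) (ψ : Ω → ℝ) (φ ν ε : ℤ → Ω → ℝ) (w : ℤ → Ω → ℝ)
    (hψ : MemLp ψ 2 P) (hφ : ∀ t, MemLp (φ t) 2 P)
    (hν : ∀ t, MemLp (ν t) 2 P) (hε : ∀ t, MemLp (ε t) 2 P)
    (hw : ∀ t ω, w t ω = μ t * ψ ω + φ t ω + ε t ω)
    (hrec : ∀ t ω, φ t ω = ρ t * φ (t - 1) ω + ν t ω)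
    (k : ℕ)
    (hψφ : ∀ t : ℤ, cov P ψ (φ t) = 0)
    (hψε : ∀ t : ℤ, cov P ψ (ε t) = 0)
    (hφε : ∀ t t' : ℤ, cov P (φ t) (ε t') = 0)
    (hφν : ∀ t t' : ℤ, t' < t → cov P (φ t') (ν t) = 0)
    (hεε : ∀ t t' : ℤ, (k : ℤ) ≤ |t - t'| → cov P (ε t) (ε t') = 0) :
    ∀ t t' : ℤ, t' ≤ t - k - 1 →
      cov P (w t') (w t) - ρ t * cov P (w t') (w (t - 1)) =
        μ t' * (μ t - ρ t * μ (t - 1)) * Var P ψ := by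
  intro t t' ht
  have hw_cov (s : ℤ) : cov P (w t') (w s) =
      μ t' * μ s * Var P ψ + cov P (φ t') (φ s) + cov P (ε t') (ε s) := by
    rw [show w = fun s => μ s • ψ + φ s + ε s from funext₂ hw]
    exact covariance_factor_add_add _ _ hψ (hφ t') (hφ s) (hε t') (hε s)
      (hψφ t') (hψφ s) (hψε t') (hψε s) (hφε t' s) (hφε s t')
  have hφ_step : cov P (φ t') (φ t) = ρ t * cov P (φ t') (φ (t - 1)) := by
    rw [show φ t = ρ t • φ (t - 1) + ν t from funext (hrec t)]
    exact covariance_smul_add_right_of_covariance_eq_zero _ (hφ t') (hφ (t - 1)) (hν t)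
      (hφν t t' (by omega))
  have hε_far (s : ℤ) (hs : t' + k ≤ s) : cov P (ε t') (ε s) = 0 :=
    hεε t' s ((by omega : (k : ℤ) ≤ -(t' - s)).trans (neg_le_abs _))
  rw [hw_cov t, hw_cov (t - 1), hφ_step, hε_far t (by omega), hε_far (t - 1) (by omega)]
  ring

/-- Quasi-differenced long autocovariance in the fixed-effect plus AR(1) model:
for `t' ≤ t − k − 1`,
`cov (w t') (w t) − ρ t * cov (w t') (w (t−1)) = μ t' * (μ t − ρ t * μ (t−1)) * Var ψ`. -/
theorem FE_AR1_quasi_differenced_autocov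
    {Ω : Type*} [MeasurableSpace Ω] (P : Measure Ω) [IsProbabilityMeasure P]
    (μ ρ : ℤ → ℝ) (ψ : Ω → ℝ) (φ ν ε : ℤ → Ω → ℝ) (w : ℤ → Ω → ℝ)
    (hψ : MemLp ψ 2 P) (hφ : ∀ t, MemLp (φ t) 2 P)
    (hν : ∀ t, MemLp (ν t) 2 P) (hε : ∀ t, MemLp (ε t) 2 P)
    (hw : ∀ t ω, w t ω = μ t * ψ ω + φ t ω + ε t ω)
    (hrec : ∀ t ω, φ t ω = ρ t * φ (t - 1) ω + ν t ω)
    (k : ℕ) (hk : 1 ≤ k)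
    (hψφ : ∀ t : ℤ, cov P ψ (φ t) = 0)
    (hψε : ∀ t : ℤ, cov P ψ (ε t) = 0)
    (hφε : ∀ t t' : ℤ, cov P (φ t) (ε t') = 0)
    (hφν : ∀ t t' : ℤ, t' < t → cov P (φ t') (ν t) = 0)
    (hεε : ∀ t t' : ℤ, (k : ℤ) ≤ |t - t'| → cov P (ε t) (ε t') = 0) :
    ∀ t t' : ℤ, t' ≤ t - k - 1 →
      cov P (w t') (w t) - ρ t * cov P (w t') (w (t - 1)) =
        μ t' * (μ t - ρ t * μ (t - 1)) * Var P ψ :=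
  FE_AR1_quasi_differenced_autocov_general P μ ρ ψ φ ν ε w hψ hφ hν hε hw hrec k hψφ hψε hφε hφν hεε
end

section
/- (Two-cohort quadratic equation for the autoregressive parameter.) Suppose two cohorts a ∈ {1, 2}, each on its own probability space, satisfy the fixed-effect/AR(1) setting with the same sequences μ_t and ρ_t and the same parameter k. For a cohort a write Cᵃ(s, r) := cov(wᵃ_s, wᵃ_r). Then for all integers t, t', t'' with t' ≤ t − k − 1 and t'' ≤ t − k − 1: ( C¹(t', t) − ρ_t·C¹(t', t−1) ) · ( C²(t'', t) − ρ_t·C²(t'', t−1) ) = ( C²(t', t) − ρ_t·C²(t', t−1) ) · ( C¹(t'', t) − ρ_t·C¹(t'', t−1) ). Equivalently, ρ_t satisfies A·ρ_t² + B·ρ_t + C = 0, where A := C¹(t', t−1)·C²(t'', t−1) − C¹(t'', t−1)·C²(t', t−1), B := C¹(t'', t)·C²(t', t−1) + C¹(t'', t−1)·C²(t', t) − C¹(t', t)·C²(t'', t−1) − C¹(t', t−1)·C²(t'', t), and C := C¹(t', t)·C²(t'', t) − C¹(t'', t)·C²(t', t). -/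
/-!
Subtracting `ρ t` times the covariance with `w (t - 1)` cancels the AR(1) skill component, and
for `T + k < t` the shocks `ε` no longer correlate, so
`C(T, t) - ρ t * C(T, t - 1) = μ T * (μ t - ρ t * μ (t - 1)) * Var ψ` factors into a part depending
only on `T` and a part depending only on the cohort. Hence the 2×2 determinant over the two
cohorts and the two lags `t', t''` vanishes, and expanding it in `ρ t` gives the quadratic.
-/

open MeasureTheory ProbabilityTheory

/-- A cohort satisfying the fixed-effect/AR(1) setting with returns `μ`, autoregressive
parameters `ρ`, and lag parameter `k` for the non-skill shocks. -/
structure FEARCohort {Ω : Type*} [MeasurableSpace Ω] (P : Measure Ω)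
    (μ ρ : ℤ → ℝ) (k : ℕ) where
  ψ : Ω → ℝ
  φ : ℤ → Ω → ℝ
  ν : ℤ → Ω → ℝ
  ε : ℤ → Ω → ℝ
  w : ℤ → Ω → ℝ
  hψ : MemLp ψ 2 P
  hφ : ∀ t, MemLp (φ t) 2 P
  hν : ∀ t, MemLp (ν t) 2 P
  hε : ∀ t, MemLp (ε t) 2 P
  hw : ∀ t ω, w t ω = μ t * ψ ω + φ t ω + ε t ω
  hrec : ∀ t ω, φ t ω = ρ t * φ (t - 1) ω + ν t ω
  hψφ : ∀ t : ℤ, cov P ψ (φ t) = 0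
  hψε : ∀ t : ℤ, cov P ψ (ε t) = 0
  hφε : ∀ t t' : ℤ, cov P (φ t) (ε t') = 0
  hφν : ∀ t t' : ℤ, t' < t → cov P (φ t') (ν t) = 0
  hεε : ∀ t t' : ℤ, (k : ℤ) ≤ |t - t'| → cov P (ε t) (ε t') = 0

theorem cov_eq_covariance_s8 {Ω : Type*} [MeasurableSpace Ω] (P : Measure Ω) (X Y : Ω → ℝ) :
    cov P X Y = covariance X Y P := rfl

namespace FEARCohort

variable {Ω : Type*} [MeasurableSpace Ω] {P : Measure Ω} {μ ρ : ℤ → ℝ} {k : ℕ}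
  (c : FEARCohort P μ ρ k)

theorem w_eq (t : ℤ) : c.w t = μ t • c.ψ + c.φ t + c.ε t :=
  funext (c.hw t)

variable [IsFiniteMeasure P]

theorem cov_w_w (s r : ℤ) :
    cov P (c.w s) (c.w r) =
      μ s * μ r * Var P c.ψ + cov P (c.φ s) (c.φ r) + cov P (c.ε s) (c.ε r) := by
  have hψs := c.hψ.const_smul (μ s)
  have hψr := c.hψ.const_smul (μ r)
  have hψφ := c.hψφ
  have hψε := c.hψε
  have hφε := c.hφε
  simp only [cov_eq_covariance_s8] at hψφ hψε hφε
  simp only [Var, cov_eq_covariance_s8, w_eq]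
  rw [covariance_add_left (hψs.add (c.hφ s)) (c.hε s) ((hψr.add (c.hφ r)).add (c.hε r)),
    covariance_add_left hψs (c.hφ s) ((hψr.add (c.hφ r)).add (c.hε r))]
  rw [covariance_add_right hψs (hψr.add (c.hφ r)) (c.hε r), covariance_add_right hψs hψr (c.hφ r),
    covariance_add_right (c.hφ s) (hψr.add (c.hφ r)) (c.hε r),
    covariance_add_right (c.hφ s) hψr (c.hφ r),
    covariance_add_right (c.hε s) (hψr.add (c.hφ r)) (c.hε r),
    covariance_add_right (c.hε s) hψr (c.hφ r)]
  rw [covariance_comm (c.φ s), covariance_comm (c.ε s) (_ • _), covariance_comm (c.ε s) (c.φ r)]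
  simp only [covariance_smul_left, covariance_smul_right, hψφ, hψε, hφε]
  ring

theorem cov_φ_φ_of_lt {T t : ℤ} (hT : T < t) :
    cov P (c.φ T) (c.φ t) = ρ t * cov P (c.φ T) (c.φ (t - 1)) := by
  have hrec : c.φ t = ρ t • c.φ (t - 1) + c.ν t := funext (c.hrec t)
  have hφν : covariance (c.φ T) (c.ν t) P = 0 := c.hφν t T hT
  rw [cov_eq_covariance_s8, hrec, covariance_add_right (c.hφ T) ((c.hφ _).const_smul _) (c.hν t),
    covariance_smul_right, hφν, add_zero]
  rfl

theorem cov_w_sub_mul_cov_w_pred {T t : ℤ} (hT : T + k < t) :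
    cov P (c.w T) (c.w t) - ρ t * cov P (c.w T) (c.w (t - 1)) =
      μ T * (μ t - ρ t * μ (t - 1)) * Var P c.ψ := by
  have hε : ∀ r, t - 1 ≤ r → cov P (c.ε T) (c.ε r) = 0 :=
    fun r hr => c.hεε T r (le_abs.2 (Or.inr (by omega)))
  rw [c.cov_w_w, c.cov_w_w, c.cov_φ_φ_of_lt (by omega), hε t (by omega), hε (t - 1) le_rfl]
  ring

end FEARCohort

theorem two_cohort_quadratic_for_rho_general
    {Ω₁ Ω₂ : Type*} [MeasurableSpace Ω₁] [MeasurableSpace Ω₂]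
    (P₁ : Measure Ω₁) (P₂ : Measure Ω₂)
    [IsProbabilityMeasure P₁] [IsProbabilityMeasure P₂]
    (μ ρ : ℤ → ℝ) (k : ℕ)
    (c₁ : FEARCohort P₁ μ ρ k) (c₂ : FEARCohort P₂ μ ρ k)
    (C₁ C₂ : ℤ → ℤ → ℝ)
    (hC₁ : ∀ s r : ℤ, C₁ s r = cov P₁ (c₁.w s) (c₁.w r))
    (hC₂ : ∀ s r : ℤ, C₂ s r = cov P₂ (c₂.w s) (c₂.w r))
    (t t' t'' : ℤ) (ht' : t' ≤ t - k - 1) (ht'' : t'' ≤ t - k - 1)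
    (A B C : ℝ)
    (hA : A = C₁ t' (t - 1) * C₂ t'' (t - 1) - C₁ t'' (t - 1) * C₂ t' (t - 1))
    (hB : B = C₁ t'' t * C₂ t' (t - 1) + C₁ t'' (t - 1) * C₂ t' t
            - C₁ t' t * C₂ t'' (t - 1) - C₁ t' (t - 1) * C₂ t'' t)
    (hC : C = C₁ t' t * C₂ t'' t - C₁ t'' t * C₂ t' t) :
    (C₁ t' t - ρ t * C₁ t' (t - 1)) * (C₂ t'' t - ρ t * C₂ t'' (t - 1)) =
        (C₂ t' t - ρ t * C₂ t' (t - 1)) * (C₁ t'' t - ρ t * C₁ t'' (t - 1)) ∧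
      A * ρ t ^ 2 + B * ρ t + C = 0 := by
  have hD₁ : ∀ T ≤ t - k - 1,
      C₁ T t - ρ t * C₁ T (t - 1) = μ T * (μ t - ρ t * μ (t - 1)) * Var P₁ c₁.ψ := fun T hT => by
    rw [hC₁, hC₁]
    exact c₁.cov_w_sub_mul_cov_w_pred (by omega)
  have hD₂ : ∀ T ≤ t - k - 1,
      C₂ T t - ρ t * C₂ T (t - 1) = μ T * (μ t - ρ t * μ (t - 1)) * Var P₂ c₂.ψ := fun T hT => by
    rw [hC₂, hC₂]
    exact c₂.cov_w_sub_mul_cov_w_pred (by omega)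
  have hcross : (C₁ t' t - ρ t * C₁ t' (t - 1)) * (C₂ t'' t - ρ t * C₂ t'' (t - 1)) =
      (C₂ t' t - ρ t * C₂ t' (t - 1)) * (C₁ t'' t - ρ t * C₁ t'' (t - 1)) := by
    rw [hD₁ t' ht', hD₂ t'' ht'', hD₂ t' ht', hD₁ t'' ht'']
    ring
  refine ⟨hcross, ?_⟩
  subst hA hB hC
  linear_combination hcross

/-- Two-cohort quadratic equation for the autoregressive parameter `ρ t`. -/
theorem two_cohort_quadratic_for_rho
    {Ω₁ Ω₂ : Type*} [MeasurableSpace Ω₁] [MeasurableSpace Ω₂]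
    (P₁ : Measure Ω₁) (P₂ : Measure Ω₂)
    [IsProbabilityMeasure P₁] [IsProbabilityMeasure P₂]
    (μ ρ : ℤ → ℝ) (k : ℕ) (hk : 1 ≤ k)
    (c₁ : FEARCohort P₁ μ ρ k) (c₂ : FEARCohort P₂ μ ρ k)
    (C₁ C₂ : ℤ → ℤ → ℝ)
    (hC₁ : ∀ s r : ℤ, C₁ s r = cov P₁ (c₁.w s) (c₁.w r))
    (hC₂ : ∀ s r : ℤ, C₂ s r = cov P₂ (c₂.w s) (c₂.w r))
    (t t' t'' : ℤ) (ht' : t' ≤ t - k - 1) (ht'' : t'' ≤ t - k - 1)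
    (A B C : ℝ)
    (hA : A = C₁ t' (t - 1) * C₂ t'' (t - 1) - C₁ t'' (t - 1) * C₂ t' (t - 1))
    (hB : B = C₁ t'' t * C₂ t' (t - 1) + C₁ t'' (t - 1) * C₂ t' t
            - C₁ t' t * C₂ t'' (t - 1) - C₁ t' (t - 1) * C₂ t'' t)
    (hC : C = C₁ t' t * C₂ t'' t - C₁ t'' t * C₂ t' t) :
    (C₁ t' t - ρ t * C₁ t' (t - 1)) * (C₂ t'' t - ρ t * C₂ t'' (t - 1)) =
        (C₂ t' t - ρ t * C₂ t' (t - 1)) * (C₁ t'' t - ρ t * C₁ t'' (t - 1)) ∧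
      A * ρ t ^ 2 + B * ρ t + C = 0 :=
  two_cohort_quadratic_for_rho_general P₁ P₂ μ ρ k c₁ c₂ C₁ C₂ hC₁ hC₂ t t' t'' ht' ht'' A B C hA hB
    hC
end
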